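/- For ε > 0 let J_ε = (I − ε²Δ_x)^{-1} on 𝕋^d. There is a constant C depending only on d such that for every ε ∈ (0,1], every vector field u ∈ W^{1,∞}(𝕋^d; ℝ^d), and every h ∈ H^1(𝕋^d), the commutator satisfies ‖[u·∇_x, J_ε] h‖_{L²(𝕋^d)} ≤ C ‖u‖_{W^{1,∞}(𝕋^d)} ‖h‖_{L²(𝕋^d)}; in particular the estimate is uniform in ε. -/

import Mathlib

open MeasureTheory

/-- The L²(𝕋^d) norm, computed on the fundamental cube `[0,1]^d` of the unit torus. -/
noncomputable def L2cube' (d : ℕ) (w : (Fin d → ℝ) → ℝ) : ℝ :=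
  (∫ x in Set.Icc (0 : Fin d → ℝ) 1, (w x) ^ 2) ^ (1/2 : ℝ)

namespace Stmt17
open Set
variable {d n : ℕ}

/-- i-th partial derivative -/
noncomputable def pd (i : Fin d) (f : (Fin d → ℝ) → ℝ) : (Fin d → ℝ) → ℝ :=
  fun x => fderiv ℝ f x (Pi.single i 1)

/-- ℤ^d-periodicity -/
def Per (f : (Fin d → ℝ) → ℝ) : Prop :=
  ∀ x (m : Fin d → ℤ), f (x + fun i => (m i : ℝ)) = f x

/-- integral over the fundamental cube -/
noncomputable def A (d : ℕ) (f : (Fin d → ℝ) → ℝ) : ℝ :=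
  ∫ x in Icc (0 : Fin d → ℝ) 1, f x

lemma pd_contDiff {f : (Fin d → ℝ) → ℝ} (hf : ContDiff ℝ (⊤ : ℕ∞) f) (i : Fin d) :
    ContDiff ℝ (⊤ : ℕ∞) (pd i f) :=
  (hf.fderiv_right (by simp)).clm_apply contDiff_const

lemma fderiv_shift {f : (Fin d → ℝ) → ℝ} (hf : ContDiff ℝ (⊤ : ℕ∞) f) (x c : Fin d → ℝ) :
    fderiv ℝ (fun y => f (y + c)) x = fderiv ℝ f (x + c) := by
  have h1 : HasFDerivAt (fun y : Fin d → ℝ => y + c) (ContinuousLinearMap.id ℝ _) x := by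
    simpa using (hasFDerivAt_id (𝕜 := ℝ) x).add_const c
  have h2 : HasFDerivAt f (fderiv ℝ f (x + c)) (x + c) :=
    (hf.differentiable (by simp) (x + c)).hasFDerivAt
  have := (h2.comp x h1).fderiv
  simpa [Function.comp_def] using this

lemma Per.pdP {f : (Fin d → ℝ) → ℝ} (hf : ContDiff ℝ (⊤ : ℕ∞) f) (pf : Per f) (i : Fin d) :
    Per (pd i f) := by
  intro x m
  have hfun : (fun y => f (y + fun i => (m i : ℝ))) = f := funext fun y => pf y m
  have := fderiv_shift hf x (fun i => (m i : ℝ))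
  rw [hfun] at this
  simp only [Stmt17.pd, ← this]

lemma Per.mul {f g : (Fin d → ℝ) → ℝ} (pf : Per f) (pg : Per g) : Per (fun x => f x * g x) :=
  fun x m => by simp [pf x m, pg x m]

lemma Per.sub {f g : (Fin d → ℝ) → ℝ} (pf : Per f) (pg : Per g) : Per (fun x => f x - g x) :=
  fun x m => by simp [pf x m, pg x m]

lemma Per.sum {ι : Type*} (s : Finset ι) (f : ι → (Fin d → ℝ) → ℝ)
    (pf : ∀ i ∈ s, Per (f i)) : Per (fun x => ∑ i ∈ s, f i x) :=
  fun x m => Finset.sum_congr rfl fun i hi => pf i hi x m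

lemma pd_mul {f g : (Fin d → ℝ) → ℝ} (hf : ContDiff ℝ (⊤ : ℕ∞) f) (hg : ContDiff ℝ (⊤ : ℕ∞) g) (i : Fin d) :
    pd i (fun x => f x * g x) = fun x => pd i f x * g x + f x * pd i g x := by
  funext x
  have := fderiv_fun_mul (𝕜 := ℝ) (hf.differentiable (by simp) x) (hg.differentiable (by simp) x)
  simp only [pd, this]
  simp only [ContinuousLinearMap.add_apply, ContinuousLinearMap.coe_smul', Pi.smul_apply,
    smul_eq_mul]
  ring

lemma pd_sub {f g : (Fin d → ℝ) → ℝ} (hf : ContDiff ℝ (⊤ : ℕ∞) f) (hg : ContDiff ℝ (⊤ : ℕ∞) g) (i : Fin d) :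
    pd i (fun x => f x - g x) = fun x => pd i f x - pd i g x := by
  funext x
  simp only [pd, fderiv_fun_sub (hf.differentiable (by simp) x) (hg.differentiable (by simp) x)]
  rfl

lemma pd_const_mul {f : (Fin d → ℝ) → ℝ} (hf : ContDiff ℝ (⊤ : ℕ∞) f) (c : ℝ) (i : Fin d) :
    pd i (fun x => c * f x) = fun x => c * pd i f x := by
  funext x
  simp only [pd, fderiv_const_mul (hf.differentiable (by simp) x) c]
  rfl

lemma pd_sum {ι : Type*} (s : Finset ι) (f : ι → (Fin d → ℝ) → ℝ)
    (hf : ∀ j ∈ s, ContDiff ℝ (⊤ : ℕ∞) (f j)) (i : Fin d) :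
    pd i (fun x => ∑ j ∈ s, f j x) = fun x => ∑ j ∈ s, pd i (f j) x := by
  funext x
  simp only [pd]
  rw [fderiv_fun_sum (fun j hj => (hf j hj).differentiable (by simp) x)]
  simp

/-- Schwarz symmetry of second partials -/
lemma pd_comm {f : (Fin d → ℝ) → ℝ} (hf : ContDiff ℝ (⊤ : ℕ∞) f) (i j : Fin d) :
    pd i (pd j f) = pd j (pd i f) := by
  funext x
  have hd1 : ∀ y, HasFDerivAt f (fderiv ℝ f y) y :=
    fun y => (hf.differentiable (by simp) y).hasFDerivAt
  have hd2 : HasFDerivAt (fderiv ℝ f) (fderiv ℝ (fderiv ℝ f) x) x :=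
    (((hf.fderiv_right (by simp) : ContDiff ℝ (⊤ : ℕ∞) (fderiv ℝ f)).differentiable (by simp)) x).hasFDerivAt
  have sym := second_derivative_symmetric hd1 hd2 (Pi.single i 1) (Pi.single j 1)
  have hfd : ContDiff ℝ (⊤ : ℕ∞) (fderiv ℝ f) := hf.fderiv_right (by simp)
  have e1 : ∀ (v w : Fin d → ℝ) y, fderiv ℝ (fun z => fderiv ℝ f z v) y w
      = (fderiv ℝ (fderiv ℝ f) y w) v := by
    intro v w y
    rw [fderiv_clm_apply (hfd.differentiable (by simp) y) (differentiableAt_const v)]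
    simp
  show fderiv ℝ (fun z => fderiv ℝ f z (Pi.single j 1)) x (Pi.single i 1)
      = fderiv ℝ (fun z => fderiv ℝ f z (Pi.single i 1)) x (Pi.single j 1)
  rw [e1, e1]
  exact sym

/-- key: integral of a partial derivative of a smooth periodic function over the unit cube is 0 -/
lemma integral_pd {f : (Fin (n+1) → ℝ) → ℝ} (hf : ContDiff ℝ (⊤ : ℕ∞) f) (pf : Per f) (i : Fin (n+1)) :
    A (n+1) (pd i f) = 0 := by
  rw [A]
  set F : (Fin (n+1) → ℝ) → Fin (n+1) → ℝ := fun x => Pi.single i (f x) with hF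
  set F' : (Fin (n+1) → ℝ) → (Fin (n+1) → ℝ) →L[ℝ] (Fin (n+1) → ℝ) := fun x =>
    (ContinuousLinearMap.pi (Pi.single i (ContinuousLinearMap.id ℝ ℝ))).comp (fderiv ℝ f x) with hF'
  have hdiv : ∀ x, (∑ j, (F' x) (Pi.single j 1) j) = pd i f x := by
    intro x
    rw [Finset.sum_eq_single i]
    · simp [hF', pd]
    · intro j _ hj
      simp [hF', Pi.single_apply, hj]
    · simp
  have key := integral_divergence_of_hasFDerivAt_off_countable
    (a := (0 : Fin (n+1) → ℝ)) (b := 1) (fun i => zero_le_one) F F' ∅ countable_empty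
    (by
      apply Continuous.continuousOn
      exact continuous_pi fun j => by
        rcases eq_or_ne j i with rfl | hj
        · have : (fun a => F a j) = f := by
            funext a; simp [hF]
          rw [this]; exact hf.continuous
        · have : (fun a => F a j) = fun _ => (0:ℝ) := by
            funext a; simp [hF, Pi.single_eq_of_ne hj]
          rw [this]; exact continuous_const)
    (by
      intro x _
      have h1 : HasFDerivAt f (fderiv ℝ f x) x := (hf.differentiable (by simp) x).hasFDerivAt
      have h2 := (hasFDerivAt_single (𝕜 := ℝ) (E := fun _ : Fin (n+1) => ℝ) (i := i) (y := f x))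
      simpa [hF, hF'] using h2.comp x h1)
    (by
      have : Continuous (pd i f) := (pd_contDiff hf i).continuous
      apply (this.continuousOn.integrableOn_compact isCompact_Icc).congr_fun _ measurableSet_Icc
      intro x _; exact (hdiv x).symm)
  rw [show (fun x => pd i f x) = fun x => ∑ j, (F' x) (Pi.single j 1) j from
    funext fun x => (hdiv x).symm, key]
  apply Finset.sum_eq_zero
  intro j _
  rcases eq_or_ne j i with rfl | hj
  · apply sub_eq_zero_of_eq
    apply setIntegral_congr_fun measurableSet_Icc
    intro y _
    simp only [hF]
    rw [Pi.single_eq_same, Pi.single_eq_same]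
    have key2 : j.insertNth ((1:Fin (n+1) → ℝ) j) y
        = j.insertNth ((0:Fin (n+1) → ℝ) j) y + fun k => ((Pi.single j 1 : Fin (n+1) → ℤ) k : ℝ) := by
      funext k
      rcases eq_or_ne k j with rfl | hk
      · simp
      · obtain ⟨l, rfl⟩ := Fin.exists_succAbove_eq hk
        simp [Pi.single_eq_of_ne (Fin.succAbove_ne j l)]
    rw [key2, pf]
  · apply sub_eq_zero_of_eq
    apply setIntegral_congr_fun measurableSet_Icc
    intro y _
    simp [hF, Pi.single_eq_of_ne hj]

lemma Ig {f : (Fin d → ℝ) → ℝ} (hf : Continuous f) :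
    IntegrableOn f (Icc (0 : Fin d → ℝ) 1) volume :=
  hf.continuousOn.integrableOn_compact isCompact_Icc

/-- integration by parts on the torus -/
lemma ibp {f g : (Fin (n+1) → ℝ) → ℝ} (hf : ContDiff ℝ (⊤ : ℕ∞) f) (pf : Per f)
    (hg : ContDiff ℝ (⊤ : ℕ∞) g) (pg : Per g) (i : Fin (n+1)) :
    A (n+1) (fun x => pd i f x * g x) = - A (n+1) (fun x => f x * pd i g x) := by
  have h0 := integral_pd (hf.mul hg) (pf.mul pg) i
  rw [A, pd_mul hf hg i] at h0
  beta_reduce at h0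
  rw [integral_add (Ig (((pd_contDiff hf i).continuous).fun_mul hg.continuous))
    (Ig (hf.continuous.fun_mul (pd_contDiff hg i).continuous))] at h0
  rw [A, A]
  linarith

lemma A_congr {f g : (Fin d → ℝ) → ℝ} (h : ∀ x, f x = g x) : A d f = A d g := by
  rw [A, A]; exact setIntegral_congr_fun measurableSet_Icc fun x _ => h x

lemma A_add {f g : (Fin d → ℝ) → ℝ} (hf : Continuous f) (hg : Continuous g) :
    A d (fun x => f x + g x) = A d f + A d g :=
  integral_add (Ig hf) (Ig hg)

lemma A_sub {f g : (Fin d → ℝ) → ℝ} (hf : Continuous f) (hg : Continuous g) :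
    A d (fun x => f x - g x) = A d f - A d g :=
  integral_sub (Ig hf) (Ig hg)

lemma A_neg (f : (Fin d → ℝ) → ℝ) : A d (fun x => - f x) = - A d f :=
  integral_neg _

lemma A_smul (c : ℝ) (f : (Fin d → ℝ) → ℝ) : A d (fun x => c * f x) = c * A d f :=
  integral_const_mul c _

lemma A_sum {ι : Type*} (s : Finset ι) (f : ι → (Fin d → ℝ) → ℝ)
    (hf : ∀ i ∈ s, Continuous (f i)) :
    A d (fun x => ∑ i ∈ s, f i x) = ∑ i ∈ s, A d (f i) :=
  integral_finset_sum s fun i hi => Ig (hf i hi)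

lemma A_sq_nonneg (f : (Fin d → ℝ) → ℝ) : 0 ≤ A d (fun x => f x ^ 2) :=
  integral_nonneg fun x => sq_nonneg _

lemma A_mono {f g : (Fin d → ℝ) → ℝ} (hf : Continuous f) (hg : Continuous g)
    (h : ∀ x, f x ≤ g x) : A d f ≤ A d g :=
  integral_mono (Ig hf) (Ig hg) h

lemma L2_nonneg (f : (Fin d → ℝ) → ℝ) : 0 ≤ L2cube' d f :=
  Real.rpow_nonneg (integral_nonneg fun x => sq_nonneg _) _

lemma L2_eq_sqrt (f : (Fin d → ℝ) → ℝ) :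
    L2cube' d f = Real.sqrt (A d (fun x => f x ^ 2)) := by
  rw [L2cube', Real.sqrt_eq_rpow]; rfl

lemma L2_sq (f : (Fin d → ℝ) → ℝ) :
    (L2cube' d f) ^ 2 = A d (fun x => f x ^ 2) := by
  rw [L2_eq_sqrt, Real.sq_sqrt (A_sq_nonneg f)]

lemma L2_congr_sq {f g : (Fin d → ℝ) → ℝ} (h : ∀ x, f x ^ 2 = g x ^ 2) :
    L2cube' d f = L2cube' d g := by
  rw [L2_eq_sqrt, L2_eq_sqrt]
  congr 1
  exact A_congr h

/-- Cauchy-Schwarz -/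
lemma cs {f g : (Fin d → ℝ) → ℝ} (hf : Continuous f) (hg : Continuous g) :
    A d (fun x => f x * g x) ≤ L2cube' d f * L2cube' d g := by
  haveI : IsFiniteMeasure (volume.restrict (Icc (0 : Fin d → ℝ) 1)) := by
    constructor
    rw [Measure.restrict_apply_univ]
    exact isCompact_Icc.measure_lt_top
  obtain ⟨C, hC⟩ : ∃ C, ∀ x ∈ Icc (0 : Fin d → ℝ) 1, ‖f x‖ ≤ C ∧ ‖g x‖ ≤ C := by
    obtain ⟨Cf, hCf⟩ := isCompact_Icc.exists_bound_of_continuousOn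
      (hf.norm.continuousOn (s := Icc (0 : Fin d → ℝ) 1))
    obtain ⟨Cg, hCg⟩ := isCompact_Icc.exists_bound_of_continuousOn
      (hg.norm.continuousOn (s := Icc (0 : Fin d → ℝ) 1))
    exact ⟨max Cf Cg, fun x hx => ⟨le_trans (le_abs_self _) ((hCf x hx).trans (le_max_left _ _)),
      le_trans (le_abs_self _) ((hCg x hx).trans (le_max_right _ _))⟩⟩
  have hmf : MemLp f (ENNReal.ofReal 2) (volume.restrict (Icc (0 : Fin d → ℝ) 1)) := by
    apply MemLp.of_bound hf.aestronglyMeasurable.restrict C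
    exact (ae_restrict_iff' measurableSet_Icc).2
      (Filter.Eventually.of_forall fun x hx => (hC x hx).1)
  have hmg : MemLp g (ENNReal.ofReal 2) (volume.restrict (Icc (0 : Fin d → ℝ) 1)) := by
    apply MemLp.of_bound hg.aestronglyMeasurable.restrict C
    exact (ae_restrict_iff' measurableSet_Icc).2
      (Filter.Eventually.of_forall fun x hx => (hC x hx).2)
  have key := integral_mul_norm_le_Lp_mul_Lq (E := ℝ)
    (μ := volume.restrict (Icc (0 : Fin d → ℝ) 1))
    Real.HolderConjugate.two_two hmf hmg
  calc A d (fun x => f x * g x)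
      ≤ ∫ x in Icc (0 : Fin d → ℝ) 1, ‖f x‖ * ‖g x‖ := by
        apply integral_mono (Ig (hf.mul hg)) (Ig (hf.norm.mul hg.norm))
        intro x
        calc f x * g x ≤ |f x * g x| := le_abs_self _
          _ = ‖f x‖ * ‖g x‖ := by rw [abs_mul]; rfl
    _ ≤ (∫ x in Icc (0 : Fin d → ℝ) 1, ‖f x‖ ^ (2:ℝ)) ^ (1/2 : ℝ)
        * (∫ x in Icc (0 : Fin d → ℝ) 1, ‖g x‖ ^ (2:ℝ)) ^ (1/2 : ℝ) := key
    _ = L2cube' d f * L2cube' d g := by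
        have key2 : ∀ v : ℝ, ‖v‖ ^ (2:ℝ) = v ^ 2 := by
          intro v
          rw [show ((2:ℝ) = ((2:ℕ):ℝ)) by norm_num, Real.rpow_natCast]
          simp [sq_abs]
        rw [L2cube', L2cube']
        congr 2
        all_goals
          apply setIntegral_congr_fun measurableSet_Icc
          intro x _
          exact key2 _

/-- trilinear bound: `∫ a b c ≤ Mu ‖b‖ ‖c‖` when `|a| ≤ Mu` -/
lemma tri {a b c : (Fin d → ℝ) → ℝ} {Mu : ℝ} (ha : Continuous a) (hb : Continuous b)
    (hc : Continuous c) (hM : ∀ x, |a x| ≤ Mu) :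
    A d (fun x => a x * b x * c x) ≤ Mu * (L2cube' d b * L2cube' d c) := by
  have habs : A d (fun x => |b x| * |c x|) ≤ L2cube' d b * L2cube' d c := by
    have := cs (f := fun x => |b x|) (g := fun x => |c x|) hb.abs hc.abs
    rwa [L2_congr_sq (f := fun x => |b x|) (g := b) (fun x => by simp [sq_abs]),
      L2_congr_sq (f := fun x => |c x|) (g := c) (fun x => by simp [sq_abs])] at this
  have hMu0 : 0 ≤ Mu := le_trans (abs_nonneg _) (hM 0)
  calc A d (fun x => a x * b x * c x)
      ≤ A d (fun x => Mu * (|b x| * |c x|)) := by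
        apply A_mono ((ha.mul hb).mul hc) (continuous_const.mul (hb.abs.mul hc.abs))
        intro x
        calc a x * b x * c x ≤ |a x * b x * c x| := le_abs_self _
          _ = |a x| * (|b x| * |c x|) := by rw [abs_mul, abs_mul, mul_assoc]
          _ ≤ Mu * (|b x| * |c x|) := by
              apply mul_le_mul_of_nonneg_right (hM x)
              positivity
    _ = Mu * A d (fun x => |b x| * |c x|) := A_smul Mu _
    _ ≤ Mu * (L2cube' d b * L2cube' d c) := mul_le_mul_of_nonneg_left habs hMu0

lemma le_of_sq_le_sq {x y : ℝ} (hx : 0 ≤ x) (hy : 0 ≤ y) (h : x ^ 2 ≤ y ^ 2) : x ≤ y := by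
  nlinarith

end Stmt17

set_option maxHeartbeats 1000000 in
/-- Uniform-in-ε commutator estimate for `J_ε = (I − ε²Δ)⁻¹` on the torus: if
`w − ε²Δw = h` (i.e. `w = J_ε h`) and `z − ε²Δz = u·∇h` (i.e. `z = J_ε(u·∇h)`), then the
commutator `[u·∇, J_ε]h = u·∇w − z` satisfies `‖u·∇w − z‖_{L²} ≤ C ‖u‖_{W^{1,∞}} ‖h‖_{L²}`
with `C` depending only on `d`. -/
theorem stmt_17 (d : ℕ) (hd : 1 ≤ d) :
    ∃ C : ℝ, 0 < C ∧
      ∀ (ε : ℝ), 0 < ε → ε ≤ 1 →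
        ∀ (u : (Fin d → ℝ) → Fin d → ℝ) (h w z : (Fin d → ℝ) → ℝ) (Mu : ℝ),
          ContDiff ℝ (⊤ : ℕ∞) u → ContDiff ℝ (⊤ : ℕ∞) h → ContDiff ℝ (⊤ : ℕ∞) w → ContDiff ℝ (⊤ : ℕ∞) z →
          (∀ x (m : Fin d → ℤ), u (x + fun i => (m i : ℝ)) = u x) →
          (∀ x (m : Fin d → ℤ), h (x + fun i => (m i : ℝ)) = h x) →
          (∀ x (m : Fin d → ℤ), w (x + fun i => (m i : ℝ)) = w x) →
          (∀ x (m : Fin d → ℤ), z (x + fun i => (m i : ℝ)) = z x) →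
          (∀ x i, |u x i| ≤ Mu) →
          (∀ x i j, |fderiv ℝ (fun y => u y i) x (Pi.single j 1)| ≤ Mu) →
          (∀ x, w x - ε ^ 2 *
              (∑ i, fderiv ℝ (fun y => fderiv ℝ w y (Pi.single i 1)) x (Pi.single i 1)) = h x) →
          (∀ x, z x - ε ^ 2 *
              (∑ i, fderiv ℝ (fun y => fderiv ℝ z y (Pi.single i 1)) x (Pi.single i 1))
            = ∑ i, u x i * fderiv ℝ h x (Pi.single i 1)) →
          L2cube' d (fun x => fderiv ℝ w x (u x) - z x) ≤ C * Mu * L2cube' d h := by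
  obtain ⟨n, rfl⟩ : ∃ n, d = n + 1 := ⟨d - 1, (Nat.succ_pred_eq_of_pos hd).symm⟩
  refine ⟨2 * ((n : ℝ) + 1) ^ 2, by positivity, ?_⟩
  intro ε hε hε1 u h w z Mu hu hh hw hz pu ph pw pz hMb hMd hweq hzeq
  open Stmt17 in
  -- component functions of u
  have hui : ∀ i, ContDiff ℝ (⊤ : ℕ∞) (fun x => u x i) := fun i => contDiff_pi.mp hu i
  have pui : ∀ i : Fin (n+1), Per (fun x => u x i) := fun i x m => congrFun (pu x m) i
  have hMu0 : 0 ≤ Mu := le_trans (abs_nonneg _) (hMb 0 0)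
  have pw' : Per w := pw
  have ph' : Per h := ph
  have pz' : Per z := pz
  have hMd' : ∀ (i j : Fin (n+1)) x, |pd j (fun y => u y i) x| ≤ Mu := fun i j x => hMd x i j
  -- the Laplacian of w
  set Δw : (Fin (n+1) → ℝ) → ℝ := fun x => ∑ j, pd j (pd j w) x with hΔw_def
  have hΔw : ContDiff ℝ (⊤ : ℕ∞) Δw :=
    ContDiff.sum fun j _ => pd_contDiff (pd_contDiff hw j) j
  have pΔw : Per Δw :=
    Per.sum _ _ fun j _ => (pw'.pdP hw j).pdP (pd_contDiff hw j) j
  -- restated equations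
  have hweq' : ∀ x, w x - ε ^ 2 * Δw x = h x := hweq
  have hzeq' : ∀ x, z x - ε ^ 2 * (∑ j, pd j (pd j z) x) = ∑ i, u x i * pd i h x := hzeq
  have heq : h = fun x => w x - ε ^ 2 * Δw x := funext fun x => (hweq' x).symm
  -- u·∇w
  set Ψ : (Fin (n+1) → ℝ) → ℝ := fun x => ∑ i, u x i * pd i w x with hΨ_def
  have hΨ : ContDiff ℝ (⊤ : ℕ∞) Ψ := ContDiff.sum fun i _ => (hui i).mul (pd_contDiff hw i)
  have pΨ : Per Ψ := Per.sum _ _ fun i _ => (pui i).mul ((pw'.pdP hw i))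
  -- the commutator φ
  set φ : (Fin (n+1) → ℝ) → ℝ := fun x => Ψ x - z x with hφ_def
  have hφ : ContDiff ℝ (⊤ : ℕ∞) φ := hΨ.sub hz
  have pφ : Per φ := pΨ.sub pz'
  -- the goal function equals φ
  have hgoalfun : (fun x => fderiv ℝ w x (u x) - z x) = φ := by
    funext x
    have hexp : fderiv ℝ w x (u x) = ∑ i, u x i * fderiv ℝ w x (Pi.single i 1) := by
      conv_lhs => rw [show u x = ∑ i, Pi.single i (u x i) from (Finset.univ_sum_single (u x)).symm]
      rw [map_sum]
      refine Finset.sum_congr rfl fun i _ => ?_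
      have : (Pi.single i (u x i) : Fin (n+1) → ℝ) = u x i • (Pi.single i (1:ℝ) : Fin (n+1) → ℝ) := by
        funext j
        rcases eq_or_ne j i with rfl | hj
        · simp
        · simp [Pi.single_eq_of_ne hj]
      rw [this, ContinuousLinearMap.map_smul, smul_eq_mul]
    simp only [hφ_def, hΨ_def]
    rw [hexp]
    rfl
  rw [hgoalfun]
  -- derivative of h
  have pdh : ∀ i, pd i h = fun x => pd i w x - ε ^ 2 * pd i Δw x := by
    intro i
    rw [heq, pd_sub hw (contDiff_const.mul hΔw) i]
    funext x
    rw [pd_const_mul hΔw (ε ^ 2) i]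
  -- derivative of Δw, with Schwarz swap
  have pdΔw : ∀ i, pd i Δw = fun x => ∑ j, pd j (pd i (pd j w)) x := by
    intro i
    rw [hΔw_def, pd_sum Finset.univ _ (fun j _ => pd_contDiff (pd_contDiff hw j) j) i]
    funext x
    refine Finset.sum_congr rfl fun j _ => ?_
    rw [pd_comm (pd_contDiff hw j) i j]
  -- second derivatives of φ
  have pdφ : ∀ j, pd j φ = fun x => pd j Ψ x - pd j z x := by
    intro j; rw [hφ_def, pd_sub hΨ hz j]
  have pd2φ : ∀ j, pd j (pd j φ) = fun x => pd j (pd j Ψ) x - pd j (pd j z) x := by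
    intro j; rw [pdφ j, pd_sub (pd_contDiff hΨ j) (pd_contDiff hz j) j]
  -- the pointwise equation satisfied by the commutator
  have Eφ : ∀ x, φ x - ε ^ 2 * (∑ j, pd j (pd j φ) x)
      = ε ^ 2 * ((∑ i, u x i * (∑ j, pd j (pd i (pd j w)) x)) - ∑ j, pd j (pd j Ψ) x) := by
    intro x
    have e1 : (∑ j, pd j (pd j φ) x) = (∑ j, pd j (pd j Ψ) x) - ∑ j, pd j (pd j z) x := by
      rw [← Finset.sum_sub_distrib]
      exact Finset.sum_congr rfl fun j _ => by rw [pd2φ j]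
    have e2 : ∑ i, u x i * pd i h x
        = (∑ i, u x i * pd i w x) - ε ^ 2 * ∑ i, u x i * (∑ j, pd j (pd i (pd j w)) x) := by
      rw [Finset.mul_sum, ← Finset.sum_sub_distrib]
      refine Finset.sum_congr rfl fun i _ => ?_
      rw [pdh i]
      simp only
      rw [pdΔw i]
      ring
    have e3 := hzeq' x
    rw [e2] at e3
    have e4 : φ x = Ψ x - z x := rfl
    have e5 : Ψ x = ∑ i, u x i * pd i w x := rfl
    rw [e4, e1, e5]
    linarith [e3]
  -- continuity shorthands
  have cφ : Continuous φ := hφ.continuous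
  have cφ1 : ∀ j, Continuous (pd j φ) := fun j => (pd_contDiff hφ j).continuous
  have cφ2 : ∀ j, Continuous (pd j (pd j φ)) :=
    fun j => (pd_contDiff (pd_contDiff hφ j) j).continuous
  have cu : ∀ i, Continuous (fun x => u x i) := fun i => (hui i).continuous
  have cdu : ∀ i j, Continuous (pd j (fun y => u y i)) :=
    fun i j => (pd_contDiff (hui i) j).continuous
  have cw1 : ∀ i, Continuous (pd i w) := fun i => (pd_contDiff hw i).continuous
  have cw2 : ∀ i j, Continuous (pd i (pd j w)) :=
    fun i j => (pd_contDiff (pd_contDiff hw j) i).continuous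
  have cw3 : ∀ i j k, Continuous (pd k (pd i (pd j w))) :=
    fun i j k => (pd_contDiff (pd_contDiff (pd_contDiff hw j) i) k).continuous
  have cΨ1 : ∀ j, Continuous (pd j Ψ) := fun j => (pd_contDiff hΨ j).continuous
  have cΨ2 : ∀ j, Continuous (pd j (pd j Ψ)) :=
    fun j => (pd_contDiff (pd_contDiff hΨ j) j).continuous
  -- step S1: substitute the equation into the energy pairing
  have S1 : A (n+1) (fun x => (φ x - ε ^ 2 * (∑ j, pd j (pd j φ) x)) * φ x)
      = ε ^ 2 * A (n+1) (fun x =>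
          ((∑ i, u x i * (∑ j, pd j (pd i (pd j w)) x)) - ∑ j, pd j (pd j Ψ) x) * φ x) := by
    rw [← A_smul]
    exact A_congr fun x => by rw [Eφ x]; ring
  -- step S2: the energy pairing equals ‖φ‖² + ε²‖∇φ‖²
  have S2 : A (n+1) (fun x => (φ x - ε ^ 2 * (∑ j, pd j (pd j φ) x)) * φ x)
      = A (n+1) (fun x => φ x ^ 2) + ε ^ 2 * ∑ j, A (n+1) (fun x => pd j φ x ^ 2) := by
    have e : (fun x => (φ x - ε ^ 2 * (∑ j, pd j (pd j φ) x)) * φ x)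
        = fun x => φ x ^ 2 - ε ^ 2 * (∑ j, pd j (pd j φ) x * φ x) := by
      funext x
      rw [← Finset.sum_mul]
      ring
    rw [e, A_sub (cφ.fun_pow 2) (continuous_const.fun_mul
        (continuous_finset_sum _ fun j _ => (cφ2 j).fun_mul cφ)), A_smul,
      A_sum Finset.univ _ (fun j _ => (cφ2 j).fun_mul cφ)]
    have e2 : ∀ j : Fin (n+1), A (n+1) (fun x => pd j (pd j φ) x * φ x)
        = - A (n+1) (fun x => pd j φ x ^ 2) := by
      intro j
      rw [ibp (pd_contDiff hφ j) (pφ.pdP hφ j) hφ pφ j]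
      rw [show (fun x => pd j φ x * pd j φ x) = fun x => pd j φ x ^ 2 from
        funext fun x => by ring]
    rw [Finset.sum_congr rfl fun j _ => e2 j, Finset.sum_neg_distrib]
    ring
  -- step S3: expand the right-hand side by parts
  have pdΨ : ∀ j, pd j Ψ = fun x =>
      ∑ i, (pd j (fun y => u y i) x * pd i w x + u x i * pd j (pd i w) x) := by
    intro j
    rw [hΨ_def, pd_sum Finset.univ _ (fun i _ => (hui i).mul (pd_contDiff hw i)) j]
    funext x
    exact Finset.sum_congr rfl fun i _ => by rw [pd_mul (hui i) (pd_contDiff hw i) j]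
  have S3 : A (n+1) (fun x =>
        ((∑ i, u x i * (∑ j, pd j (pd i (pd j w)) x)) - ∑ j, pd j (pd j Ψ) x) * φ x)
      = ∑ i, ∑ j, (A (n+1) (fun x => pd j (fun y => u y i) x * pd i w x * pd j φ x)
          - A (n+1) (fun x => pd j (fun y => u y i) x * pd i (pd j w) x * φ x)) := by
    -- term A1 : transport term, integrated by parts
    have A1 : ∀ (i j : Fin (n+1)), A (n+1) (fun x => u x i * pd j (pd i (pd j w)) x * φ x)
        = - A (n+1) (fun x => pd j (fun y => u y i) x * pd i (pd j w) x * φ x)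
          - A (n+1) (fun x => u x i * pd i (pd j w) x * pd j φ x) := by
      intro i j
      have r1 : (fun x => u x i * pd j (pd i (pd j w)) x * φ x)
          = fun x => pd j (pd i (pd j w)) x * ((fun y => u y i) x * φ x) := by
        funext x; ring
      rw [r1, ibp (pd_contDiff (pd_contDiff hw j) i)
        ((pw'.pdP hw j).pdP (pd_contDiff hw j) i) ((hui i).mul hφ) ((pui i).mul pφ) j]
      rw [show (fun x => pd i (pd j w) x * pd j (fun x => (fun y => u y i) x * φ x) x)
          = fun x => pd i (pd j w) x * pd j (fun y => u y i) x * φ x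
            + u x i * pd i (pd j w) x * pd j φ x from ?_]
      · rw [A_add (((cw2 i j).fun_mul (cdu i j)).fun_mul cφ) (((cu i).fun_mul (cw2 i j)).fun_mul (cφ1 j))]
        have : A (n+1) (fun x => pd i (pd j w) x * pd j (fun y => u y i) x * φ x)
            = A (n+1) (fun x => pd j (fun y => u y i) x * pd i (pd j w) x * φ x) :=
          A_congr fun x => by ring
        rw [this]; ring
      · funext x
        rw [pd_mul (hui i) hφ j]
        ring
    -- term A2 : diffusion term, integrated by parts
    have A2 : ∀ j : Fin (n+1), A (n+1) (fun x => pd j (pd j Ψ) x * φ x)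
        = ∑ i, (- A (n+1) (fun x => pd j (fun y => u y i) x * pd i w x * pd j φ x)
            - A (n+1) (fun x => u x i * pd j (pd i w) x * pd j φ x)) := by
      intro j
      rw [ibp (pd_contDiff hΨ j) (pΨ.pdP hΨ j) hφ pφ j]
      have r2 : (fun x => pd j Ψ x * pd j φ x)
          = fun x => ∑ i, (pd j (fun y => u y i) x * pd i w x * pd j φ x
              + u x i * pd j (pd i w) x * pd j φ x) := by
        funext x
        rw [pdΨ j]
        simp only
        rw [Finset.sum_mul]
        exact Finset.sum_congr rfl fun i _ => by ring
      rw [r2, A_sum Finset.univ _ (fun i _ =>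
        (((cdu i j).fun_mul (cw1 i)).fun_mul (cφ1 j)).fun_add (((cu i).fun_mul (cw2 j i)).fun_mul (cφ1 j)))]
      rw [← Finset.sum_neg_distrib]
      refine Finset.sum_congr rfl fun i _ => ?_
      rw [A_add (((cdu i j).fun_mul (cw1 i)).fun_mul (cφ1 j)) (((cu i).fun_mul (cw2 j i)).fun_mul (cφ1 j))]
      ring
    -- expand the left factor
    have L : A (n+1) (fun x =>
          ((∑ i, u x i * (∑ j, pd j (pd i (pd j w)) x)) - ∑ j, pd j (pd j Ψ) x) * φ x)
        = (∑ i, ∑ j, A (n+1) (fun x => u x i * pd j (pd i (pd j w)) x * φ x))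
          - ∑ j, A (n+1) (fun x => pd j (pd j Ψ) x * φ x) := by
      have r3 : (fun x =>
            ((∑ i, u x i * (∑ j, pd j (pd i (pd j w)) x)) - ∑ j, pd j (pd j Ψ) x) * φ x)
          = fun x => (∑ i, ∑ j, u x i * pd j (pd i (pd j w)) x * φ x)
              - ∑ j, pd j (pd j Ψ) x * φ x := by
        funext x
        rw [sub_mul]
        congr 1
        · rw [Finset.sum_mul]
          refine Finset.sum_congr rfl fun i _ => ?_
          rw [Finset.mul_sum, Finset.sum_mul]
        · rw [Finset.sum_mul]
      rw [r3, A_sub (continuous_finset_sum _ fun i _ => continuous_finset_sum _ fun j _ =>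
          (((cu i).fun_mul (cw3 i j j)).fun_mul cφ))
        (continuous_finset_sum _ fun j _ => (cΨ2 j).fun_mul cφ)]
      congr 1
      rw [A_sum Finset.univ _ (fun i _ => continuous_finset_sum _ fun j _ =>
          (((cu i).fun_mul (cw3 i j j)).fun_mul cφ))]
      · refine Finset.sum_congr rfl fun i _ => ?_
        rw [A_sum Finset.univ _ (fun j _ => (((cu i).fun_mul (cw3 i j j)).fun_mul cφ))]
      · rw [A_sum Finset.univ _ (fun j _ => (cΨ2 j).fun_mul cφ)]
    rw [L]
    rw [Finset.sum_congr rfl fun j (_ : j ∈ Finset.univ) => A2 j]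
    rw [Finset.sum_comm (s := Finset.univ) (t := Finset.univ)
      (f := fun j i => - A (n+1) (fun x => pd j (fun y => u y i) x * pd i w x * pd j φ x)
        - A (n+1) (fun x => u x i * pd j (pd i w) x * pd j φ x))]
    rw [← Finset.sum_sub_distrib]
    refine Finset.sum_congr rfl fun i _ => ?_
    rw [Finset.sum_congr rfl fun j (_ : j ∈ Finset.univ) => A1 i j, ← Finset.sum_sub_distrib]
    refine Finset.sum_congr rfl fun j _ => ?_
    have swap : A (n+1) (fun x => u x i * pd j (pd i w) x * pd j φ x)
        = A (n+1) (fun x => u x i * pd i (pd j w) x * pd j φ x) := by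
      apply A_congr
      intro x
      rw [pd_comm hw j i]
    rw [swap]
    ring
  -- abbreviation for norms
  set nh : ℝ := L2cube' (n+1) h with hnh_def
  have hnh0 : 0 ≤ nh := L2_nonneg h
  -- energy estimate no.1 : A w² + ε² Σ A (∂w)² = A (w h)
  have energy1 : A (n+1) (fun x => w x ^ 2) + ε ^ 2 * ∑ j, A (n+1) (fun x => pd j w x ^ 2)
      = A (n+1) (fun x => w x * h x) := by
    have r : (fun x => w x * h x)
        = fun x => w x ^ 2 - ε ^ 2 * (∑ j, pd j (pd j w) x * w x) := by
      funext x
      rw [← hweq' x, ← Finset.sum_mul]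
      ring
    rw [r, A_sub (hw.continuous.fun_pow 2) (continuous_const.fun_mul
        (continuous_finset_sum _ fun j _ => ((pd_contDiff (pd_contDiff hw j) j).continuous).fun_mul
          hw.continuous)), A_smul,
      A_sum Finset.univ _ (fun j _ => ((pd_contDiff (pd_contDiff hw j) j).continuous).fun_mul
        hw.continuous)]
    have e2 : ∀ j : Fin (n+1), A (n+1) (fun x => pd j (pd j w) x * w x)
        = - A (n+1) (fun x => pd j w x ^ 2) := by
      intro j
      rw [ibp (pd_contDiff hw j) (pw'.pdP hw j) hw pw' j]
      rw [show (fun x => pd j w x * pd j w x) = fun x => pd j w x ^ 2 from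
        funext fun x => by ring]
    rw [Finset.sum_congr rfl fun j _ => e2 j, Finset.sum_neg_distrib]
    ring
  have hAwh : A (n+1) (fun x => w x * h x) ≤ L2cube' (n+1) w * nh := cs hw.continuous hh.continuous
  have hNw : L2cube' (n+1) w ≤ nh := by
    have h1 : (L2cube' (n+1) w) ^ 2 ≤ L2cube' (n+1) w * nh := by
      rw [L2_sq]
      have h2 : 0 ≤ ε ^ 2 * ∑ j, A (n+1) (fun x => pd j w x ^ 2) := by
        apply mul_nonneg (sq_nonneg ε)
        exact Finset.sum_nonneg fun j _ => A_sq_nonneg _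
      linarith [energy1, hAwh]
    nlinarith [L2_nonneg (d := n+1) w, hnh0]
  have hAwh2 : A (n+1) (fun x => w x * h x) ≤ nh ^ 2 := by
    calc A (n+1) (fun x => w x * h x) ≤ L2cube' (n+1) w * nh := hAwh
      _ ≤ nh * nh := mul_le_mul_of_nonneg_right hNw hnh0
      _ = nh ^ 2 := by ring
  -- gradient bound : ε ‖∂ᵢw‖ ≤ ‖h‖
  have hNpdw : ∀ i, ε * L2cube' (n+1) (pd i w) ≤ nh := by
    intro i
    apply le_of_sq_le_sq (mul_nonneg hε.le (L2_nonneg _)) hnh0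
    have h1 : A (n+1) (fun x => pd i w x ^ 2) ≤ ∑ j, A (n+1) (fun x => pd j w x ^ 2) :=
      Finset.single_le_sum (f := fun j => A (n+1) (fun x => pd j w x ^ 2))
        (fun j _ => A_sq_nonneg _) (Finset.mem_univ i)
    have h2 : 0 ≤ A (n+1) (fun x => w x ^ 2) := A_sq_nonneg _
    rw [mul_pow, L2_sq]
    nlinarith [energy1, hAwh2]
  -- energy estimate no.2 : Σ A (∂w)² + ε² A (Δw)² = A (−h Δw)
  have energy2 : (∑ j, A (n+1) (fun x => pd j w x ^ 2)) + ε ^ 2 * A (n+1) (fun x => Δw x ^ 2)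
      = A (n+1) (fun x => (- h x) * Δw x) := by
    have r : (fun x => (- h x) * Δw x)
        = fun x => ε ^ 2 * (Δw x ^ 2) - ∑ j, w x * pd j (pd j w) x := by
      funext x
      rw [← hweq' x, ← Finset.mul_sum]
      show -(w x - ε ^ 2 * Δw x) * Δw x = ε ^ 2 * Δw x ^ 2 - w x * Δw x
      ring
    rw [r, A_sub (continuous_const.fun_mul (hΔw.continuous.fun_pow 2))
        (continuous_finset_sum _ fun j _ => hw.continuous.fun_mul
          ((pd_contDiff (pd_contDiff hw j) j).continuous)), A_smul,
      A_sum Finset.univ _ (fun j _ => hw.continuous.fun_mul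
        ((pd_contDiff (pd_contDiff hw j) j).continuous))]
    have e2 : ∀ j : Fin (n+1), A (n+1) (fun x => w x * pd j (pd j w) x)
        = - A (n+1) (fun x => pd j w x ^ 2) := by
      intro j
      have r2 : (fun x => w x * pd j (pd j w) x) = fun x => pd j (pd j w) x * w x :=
        funext fun x => by ring
      rw [r2, ibp (pd_contDiff hw j) (pw'.pdP hw j) hw pw' j,
        show (fun x => pd j w x * pd j w x) = fun x => pd j w x ^ 2 from
          funext fun x => by ring]
    rw [Finset.sum_congr rfl fun j _ => e2 j, Finset.sum_neg_distrib]
    ring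
  -- bound : ε² ‖Δw‖ ≤ ‖h‖
  have hNΔw : ε ^ 2 * L2cube' (n+1) Δw ≤ nh := by
    have h1 : A (n+1) (fun x => (- h x) * Δw x) ≤ nh * L2cube' (n+1) Δw := by
      have := cs (f := fun x => - h x) (g := Δw) hh.continuous.neg hΔw.continuous
      rwa [L2_congr_sq (f := fun x => - h x) (g := h) (fun x => by ring)] at this
    have h2 : 0 ≤ ∑ j, A (n+1) (fun x => pd j w x ^ 2) :=
      Finset.sum_nonneg fun j _ => A_sq_nonneg _
    have h3 : (ε ^ 2 * L2cube' (n+1) Δw) ^ 2 ≤ nh * (ε ^ 2 * L2cube' (n+1) Δw) := by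
      have h4 : ε ^ 2 * A (n+1) (fun x => Δw x ^ 2) ≤ nh * L2cube' (n+1) Δw := by
        linarith [energy2]
      have h5 : (ε ^ 2 * L2cube' (n+1) Δw) ^ 2
          = ε ^ 2 * (ε ^ 2 * A (n+1) (fun x => Δw x ^ 2)) := by
        rw [mul_pow, L2_sq]; ring
      calc (ε ^ 2 * L2cube' (n+1) Δw) ^ 2
          = ε ^ 2 * (ε ^ 2 * A (n+1) (fun x => Δw x ^ 2)) := h5
        _ ≤ ε ^ 2 * (nh * L2cube' (n+1) Δw) := by
            apply mul_le_mul_of_nonneg_left h4 (sq_nonneg ε)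
        _ = nh * (ε ^ 2 * L2cube' (n+1) Δw) := by ring
    nlinarith [mul_nonneg (sq_nonneg ε) (L2_nonneg (d := n+1) Δw), hnh0]
  -- ‖∂ᵢ∂ⱼ w‖ ≤ ‖Δw‖ : the identity A(Δw²) = Σᵢⱼ A((∂ᵢ∂ⱼw)²)
  have J3id : A (n+1) (fun x => Δw x ^ 2)
      = ∑ i, ∑ j, A (n+1) (fun x => pd i (pd j w) x ^ 2) := by
    have r : (fun x => Δw x ^ 2) = fun x => ∑ i, pd i (pd i w) x * Δw x := by
      funext x
      rw [← Finset.sum_mul]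
      show Δw x ^ 2 = Δw x * Δw x
      ring
    rw [r, A_sum Finset.univ _ (fun i _ => (cw2 i i).fun_mul hΔw.continuous)]
    refine Finset.sum_congr rfl fun i _ => ?_
    rw [ibp (pd_contDiff hw i) (pw'.pdP hw i) hΔw pΔw i]
    have r2 : (fun x => pd i w x * pd i Δw x)
        = fun x => ∑ j, pd j (pd i (pd j w)) x * pd i w x := by
      funext x
      rw [pdΔw i]
      simp only
      rw [Finset.mul_sum]
      exact Finset.sum_congr rfl fun j _ => by ring
    rw [r2, A_sum Finset.univ _ (fun j _ => (cw3 i j j).fun_mul (cw1 i)), ← Finset.sum_neg_distrib]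
    refine Finset.sum_congr rfl fun j _ => ?_
    rw [ibp (pd_contDiff (pd_contDiff hw j) i) ((pw'.pdP hw j).pdP (pd_contDiff hw j) i)
      (pd_contDiff hw i) (pw'.pdP hw i) j, neg_neg]
    apply A_congr
    intro x
    rw [pd_comm hw j i]
    ring
  have J3 : ∀ i j, L2cube' (n+1) (pd i (pd j w)) ≤ L2cube' (n+1) Δw := by
    intro i j
    apply le_of_sq_le_sq (L2_nonneg _) (L2_nonneg _)
    rw [L2_sq, L2_sq, J3id]
    have s1 : A (n+1) (fun x => pd i (pd j w) x ^ 2)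
        ≤ ∑ j', A (n+1) (fun x => pd i (pd j' w) x ^ 2) :=
      Finset.single_le_sum (f := fun j' => A (n+1) (fun x => pd i (pd j' w) x ^ 2))
        (fun _ _ => A_sq_nonneg _) (Finset.mem_univ j)
    have s2 : (∑ j', A (n+1) (fun x => pd i (pd j' w) x ^ 2))
        ≤ ∑ i', ∑ j', A (n+1) (fun x => pd i' (pd j' w) x ^ 2) :=
      Finset.single_le_sum (f := fun i' => ∑ j', A (n+1) (fun x => pd i' (pd j' w) x ^ 2))
        (fun i' _ => Finset.sum_nonneg fun _ _ => A_sq_nonneg _) (Finset.mem_univ i)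
    linarith
  -- final assembly
  set a : ℝ := L2cube' (n+1) φ with ha_def
  have ha0 : 0 ≤ a := L2_nonneg _
  set B2 : ℝ := ε ^ 2 * ∑ j, A (n+1) (fun x => pd j φ x ^ 2) with hB2_def
  have hB2 : 0 ≤ B2 :=
    mul_nonneg (sq_nonneg ε) (Finset.sum_nonneg fun j _ => A_sq_nonneg _)
  set b : ℝ := Real.sqrt B2 with hb_def
  have hb0 : 0 ≤ b := Real.sqrt_nonneg _
  have hbsq : b ^ 2 = B2 := Real.sq_sqrt hB2
  have hbj : ∀ j, ε * L2cube' (n+1) (pd j φ) ≤ b := by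
    intro j
    apply le_of_sq_le_sq (mul_nonneg hε.le (L2_nonneg _)) hb0
    rw [hbsq, mul_pow, L2_sq, hB2_def]
    apply mul_le_mul_of_nonneg_left _ (sq_nonneg ε)
    exact Finset.single_le_sum (f := fun j' => A (n+1) (fun x => pd j' φ x ^ 2))
      (fun _ _ => A_sq_nonneg _) (Finset.mem_univ j)
  -- the two per-term bounds
  have T1 : ∀ i j, A (n+1) (fun x => pd j (fun y => u y i) x * pd i w x * pd j φ x)
      ≤ Mu * (L2cube' (n+1) (pd i w) * L2cube' (n+1) (pd j φ)) := fun i j =>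
    tri (cdu i j) (cw1 i) (cφ1 j) (hMd' i j)
  have T2 : ∀ i j, - A (n+1) (fun x => pd j (fun y => u y i) x * pd i (pd j w) x * φ x)
      ≤ Mu * (L2cube' (n+1) (pd i (pd j w)) * L2cube' (n+1) φ) := by
    intro i j
    have e : - A (n+1) (fun x => pd j (fun y => u y i) x * pd i (pd j w) x * φ x)
        = A (n+1) (fun x => (- pd j (fun y => u y i) x) * pd i (pd j w) x * φ x) := by
      rw [← A_neg]
      exact A_congr fun x => by ring
    rw [e]
    exact tri (cdu i j).neg (cw2 i j) cφ (fun x => by rw [abs_neg]; exact hMd' i j x)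
  -- the main energy identity
  have main : a ^ 2 + b ^ 2
      = ε ^ 2 * ∑ i, ∑ j, (A (n+1) (fun x => pd j (fun y => u y i) x * pd i w x * pd j φ x)
          - A (n+1) (fun x => pd j (fun y => u y i) x * pd i (pd j w) x * φ x)) := by
    rw [ha_def, L2_sq, hbsq, hB2_def, ← S3, ← S1, S2]
  -- bound each term
  have each : ∀ (i j : Fin (n+1)),
      ε ^ 2 * (A (n+1) (fun x => pd j (fun y => u y i) x * pd i w x * pd j φ x)
        - A (n+1) (fun x => pd j (fun y => u y i) x * pd i (pd j w) x * φ x))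
      ≤ Mu * nh * b + Mu * nh * a := by
    intro i j
    have e1 : ε ^ 2 * A (n+1) (fun x => pd j (fun y => u y i) x * pd i w x * pd j φ x)
        ≤ Mu * nh * b := by
      calc ε ^ 2 * A (n+1) (fun x => pd j (fun y => u y i) x * pd i w x * pd j φ x)
          ≤ ε ^ 2 * (Mu * (L2cube' (n+1) (pd i w) * L2cube' (n+1) (pd j φ))) :=
            mul_le_mul_of_nonneg_left (T1 i j) (sq_nonneg ε)
        _ = Mu * ((ε * L2cube' (n+1) (pd i w)) * (ε * L2cube' (n+1) (pd j φ))) := by ring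
        _ ≤ Mu * (nh * b) := by
            apply mul_le_mul_of_nonneg_left _ hMu0
            exact mul_le_mul (hNpdw i) (hbj j) (mul_nonneg hε.le (L2_nonneg _)) hnh0
        _ = Mu * nh * b := by ring
    have e2 : ε ^ 2 * (- A (n+1) (fun x => pd j (fun y => u y i) x * pd i (pd j w) x * φ x))
        ≤ Mu * nh * a := by
      have hij : ε ^ 2 * L2cube' (n+1) (pd i (pd j w)) ≤ nh :=
        le_trans (mul_le_mul_of_nonneg_left (J3 i j) (sq_nonneg ε)) hNΔw
      calc ε ^ 2 * (- A (n+1) (fun x => pd j (fun y => u y i) x * pd i (pd j w) x * φ x))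
          ≤ ε ^ 2 * (Mu * (L2cube' (n+1) (pd i (pd j w)) * a)) :=
            mul_le_mul_of_nonneg_left (T2 i j) (sq_nonneg ε)
        _ = Mu * ((ε ^ 2 * L2cube' (n+1) (pd i (pd j w))) * a) := by ring
        _ ≤ Mu * (nh * a) :=
            mul_le_mul_of_nonneg_left (mul_le_mul_of_nonneg_right hij ha0) hMu0
        _ = Mu * nh * a := by ring
    linarith
  have bnd : a ^ 2 + b ^ 2 ≤ ((n : ℝ) + 1) ^ 2 * (Mu * nh * b + Mu * nh * a) := by
    rw [main]
    calc ε ^ 2 * ∑ i, ∑ j, (A (n+1) (fun x => pd j (fun y => u y i) x * pd i w x * pd j φ x)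
            - A (n+1) (fun x => pd j (fun y => u y i) x * pd i (pd j w) x * φ x))
        = ∑ i : Fin (n+1), ∑ j : Fin (n+1),
            ε ^ 2 * (A (n+1) (fun x => pd j (fun y => u y i) x * pd i w x * pd j φ x)
              - A (n+1) (fun x => pd j (fun y => u y i) x * pd i (pd j w) x * φ x)) := by
          rw [Finset.mul_sum]
          exact Finset.sum_congr rfl fun i _ => Finset.mul_sum _ _ _
      _ ≤ ∑ _i : Fin (n+1), ∑ _j : Fin (n+1), (Mu * nh * b + Mu * nh * a) :=
          Finset.sum_le_sum fun i _ => Finset.sum_le_sum fun j _ => each i j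
      _ = ((n : ℝ) + 1) ^ 2 * (Mu * nh * b + Mu * nh * a) := by
          simp only [Finset.sum_const, Finset.card_univ, Fintype.card_fin, nsmul_eq_mul]
          push_cast
          ring
  set K : ℝ := ((n : ℝ) + 1) ^ 2 * (Mu * nh) with hK_def
  have hK0 : 0 ≤ K := by positivity
  have hineq : a ^ 2 + b ^ 2 ≤ K * b + K * a := by
    have e : ((n : ℝ) + 1) ^ 2 * (Mu * nh * b + Mu * nh * a) = K * b + K * a := by
      rw [hK_def]; ring
    linarith [bnd, e.le, e.ge]
  have final : a ≤ 2 * K := by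
    by_contra hcon
    push_neg at hcon
    have h1 : K * b ≤ b ^ 2 + K ^ 2 / 4 := by nlinarith [sq_nonneg (2 * b - K)]
    have h2 : a ^ 2 ≤ K * a + K ^ 2 / 4 := by linarith
    have hapos : 0 < a := lt_of_le_of_lt (by positivity) hcon
    have h3 : 2 * K * a ≤ a ^ 2 := by nlinarith [hcon.le, ha0]
    have h5 : K * (2 * K) ≤ K * a := mul_le_mul_of_nonneg_left hcon.le hK0
    nlinarith [h2, h3, h5, sq_nonneg K, mul_pos hapos hapos]
  calc L2cube' (n+1) φ = a := rfl
    _ ≤ 2 * K := final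
    _ = 2 * ((n : ℝ) + 1) ^ 2 * Mu * nh := by rw [hK_def]; ring
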